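/- Let I : ℝ^d → (−∞,+∞] be convex with 0 in the interior of the effective domain 𝒟(I) = {Λ ∈ ℝ^d : I(Λ) < +∞}, and define I*(x) = inf_{Λ ∈ ℝ^d} ( −⟨x,Λ⟩ + I(Λ) ) for x ∈ ℝ^d (with values in [−∞,+∞)). Then: (i) I* is concave and upper semicontinuous on ℝ^d; (ii) for every M ∈ ℝ, the superlevel set {x ∈ ℝ^d : I*(x) ≥ M} is compact. -/
import Mathlib

noncomputable section

namespace QLDP

open scoped RealInnerProductSpace

/-- Legendre transform `I*(x) = inf_Λ (−⟨x,Λ⟩ + I(Λ))`, with values in `EReal`. -/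
def legendre {d : ℕ} (I : EuclideanSpace ℝ (Fin d) → EReal)
    (x : EuclideanSpace ℝ (Fin d)) : EReal :=
  ⨅ Λ : EuclideanSpace ℝ (Fin d), ((-⟪x, Λ⟫ : ℝ) : EReal) + I Λ

/-- properties of the rate function: if `I : ℝ^d → (−∞,∞]` is convex with
`0` in the interior of its effective domain, then `I*` is concave and upper semicontinuous,
and all superlevel sets `{x : I*(x) ≥ M}` (`M ∈ ℝ`) are compact. -/
theorem legendre_transform_properties
    (d : ℕ) (I : EuclideanSpace ℝ (Fin d) → EReal)
    (hbot : ∀ Λ, I Λ ≠ ⊥)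
    (hconv : ∀ (Λ₁ Λ₂ : EuclideanSpace ℝ (Fin d)) (a b : ℝ), 0 ≤ a → 0 ≤ b → a + b = 1 →
      I (a • Λ₁ + b • Λ₂) ≤ (a : EReal) * I Λ₁ + (b : EReal) * I Λ₂)
    (hdom : (0 : EuclideanSpace ℝ (Fin d)) ∈ interior {Λ | I Λ < ⊤}) :
    (∀ (x y : EuclideanSpace ℝ (Fin d)) (a b : ℝ), 0 ≤ a → 0 ≤ b → a + b = 1 →
      (a : EReal) * legendre I x + (b : EReal) * legendre I y ≤ legendre I (a • x + b • y)) ∧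
    UpperSemicontinuous (legendre I) ∧
    (∀ M : ℝ, IsCompact {x : EuclideanSpace ℝ (Fin d) | (M : EReal) ≤ legendre I x}) := by
  classical
  -- basic bound: legendre I x ≤ -⟪x,Λ⟫ + I Λ
  have hle : ∀ (x Λ : EuclideanSpace ℝ (Fin d)),
      legendre I x ≤ ((-⟪x, Λ⟫ : ℝ) : EReal) + I Λ := fun x Λ =>
    iInf_le (fun Λ' => ((-⟪x, Λ'⟫ : ℝ) : EReal) + I Λ') Λ
  have hle' : ∀ (x Λ : EuclideanSpace ℝ (Fin d)) (c : ℝ), I Λ = (c : EReal) →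
      legendre I x ≤ ((-⟪x, Λ⟫ + c : ℝ) : EReal) := by
    intro x Λ c hc
    have := hle x Λ
    rw [hc, ← EReal.coe_add] at this
    exact this
  -- concavity
  have hconc : ∀ (x y : EuclideanSpace ℝ (Fin d)) (a b : ℝ), 0 ≤ a → 0 ≤ b → a + b = 1 →
      (a : EReal) * legendre I x + (b : EReal) * legendre I y ≤ legendre I (a • x + b • y) := by
    intro x y a b ha hb hab
    refine le_iInf fun Λ => ?_
    rcases eq_or_ne (I Λ) ⊤ with hΛ | hΛ
    · rw [hΛ, EReal.coe_add_top]
      exact le_top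
    · obtain ⟨c, hc⟩ : ∃ c : ℝ, I Λ = (c : EReal) :=
        ⟨(I Λ).toReal, (EReal.coe_toReal hΛ (hbot Λ)).symm⟩
      have h1 := hle' x Λ c hc
      have h2 := hle' y Λ c hc
      calc (a : EReal) * legendre I x + (b : EReal) * legendre I y
          ≤ (a : EReal) * ((-⟪x, Λ⟫ + c : ℝ) : EReal)
            + (b : EReal) * ((-⟪y, Λ⟫ + c : ℝ) : EReal) :=
            add_le_add (mul_le_mul_of_nonneg_left h1 (by exact_mod_cast ha))
              (mul_le_mul_of_nonneg_left h2 (by exact_mod_cast hb))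
        _ = ((-⟪a • x + b • y, Λ⟫ + c : ℝ) : EReal) := by
            rw [← EReal.coe_mul, ← EReal.coe_mul, ← EReal.coe_add]
            norm_cast
            rw [inner_add_left, real_inner_smul_left, real_inner_smul_left]
            linear_combination c * hab
        _ = ((-⟪a • x + b • y, Λ⟫ : ℝ) : EReal) + I Λ := by
            rw [hc, EReal.coe_add]
  -- upper semicontinuity
  have husc : UpperSemicontinuous (legendre I) := by
    intro x y hy
    obtain ⟨Λ, hΛ⟩ := iInf_lt_iff.mp hy
    rcases eq_or_ne (I Λ) ⊤ with h | h
    · rw [h, EReal.coe_add_top] at hΛ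
      exact absurd hΛ (not_top_lt)
    · obtain ⟨c, hc⟩ : ∃ c : ℝ, I Λ = (c : EReal) :=
        ⟨(I Λ).toReal, (EReal.coe_toReal h (hbot Λ)).symm⟩
      rw [hc, ← EReal.coe_add] at hΛ
      have hcont : Continuous fun x' : EuclideanSpace ℝ (Fin d) =>
          ((-⟪x', Λ⟫ + c : ℝ) : EReal) :=
        continuous_coe_real_ereal.comp
          (((continuous_id.inner continuous_const).neg).add continuous_const)
      have hev : ∀ᶠ x' in nhds x, ((-⟪x', Λ⟫ + c : ℝ) : EReal) < y :=
        hcont.continuousAt.eventually_lt continuousAt_const hΛ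
      filter_upwards [hev] with x' hx'
      exact lt_of_le_of_lt (hle' x' Λ c hc) hx'
  refine ⟨hconc, husc, ?_⟩
  -- compactness of superlevel sets
  intro M
  have hclosed : IsClosed {x : EuclideanSpace ℝ (Fin d) | (M : EReal) ≤ legendre I x} := by
    have heq : {x : EuclideanSpace ℝ (Fin d) | (M : EReal) ≤ legendre I x}
        = (legendre I ⁻¹' Set.Iio (M : EReal))ᶜ := by
      ext x; simp [not_lt]
    rw [heq]
    exact (upperSemicontinuous_iff_isOpen_preimage.1 husc M).isClosed_compl
  obtain ⟨ε, hε, hball⟩ := Metric.mem_nhds_iff.mp (mem_interior_iff_mem_nhds.mp hdom)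
  -- coordinate test vectors
  set Λp : Fin d → EuclideanSpace ℝ (Fin d) :=
    fun i => (ε / 2) • EuclideanSpace.single i (1 : ℝ) with hΛp
  set Λm : Fin d → EuclideanSpace ℝ (Fin d) :=
    fun i => (-(ε / 2)) • EuclideanSpace.single i (1 : ℝ) with hΛm
  have hmem : ∀ (t : ℝ), |t| = ε / 2 → ∀ i,
      (t • EuclideanSpace.single i (1 : ℝ)) ∈ Metric.ball (0 : EuclideanSpace ℝ (Fin d)) ε := by
    intro t ht i
    rw [Metric.mem_ball, dist_zero_right, norm_smul, EuclideanSpace.norm_single]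
    simp only [norm_one, mul_one, Real.norm_eq_abs, ht]
    linarith
  have hfin : ∀ Λ ∈ Metric.ball (0 : EuclideanSpace ℝ (Fin d)) ε,
      ∃ c : ℝ, I Λ = (c : EReal) := by
    intro Λ hΛ
    have : I Λ < ⊤ := hball hΛ
    exact ⟨(I Λ).toReal, (EReal.coe_toReal this.ne (hbot Λ)).symm⟩
  choose cp hcp using fun i => hfin (Λp i) (hmem _ (by rw [abs_of_pos]; linarith) i)
  choose cm hcm using fun i => hfin (Λm i) (hmem _ (by rw [abs_neg, abs_of_pos]; linarith) i)
  set K : Fin d → ℝ := fun i => (2 / ε) * max (cp i - M) (cm i - M) with hK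
  -- pointwise coordinate bounds
  have hbound : ∀ x ∈ {x : EuclideanSpace ℝ (Fin d) | (M : EReal) ≤ legendre I x},
      ∀ i, |x i| ≤ K i := by
    intro x hx i
    have key : ∀ (Λ : EuclideanSpace ℝ (Fin d)) (c : ℝ), I Λ = (c : EReal) →
        ⟪x, Λ⟫ ≤ c - M := by
      intro Λ c hc
      have h1 : (M : EReal) ≤ ((-⟪x, Λ⟫ + c : ℝ) : EReal) := le_trans hx (hle' x Λ c hc)
      have h2 : (M : ℝ) ≤ -⟪x, Λ⟫ + c := by exact_mod_cast h1
      linarith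
    have hp := key (Λp i) (cp i) (hcp i)
    have hm := key (Λm i) (cm i) (hcm i)
    rw [hΛp] at hp
    rw [hΛm] at hm
    simp only [real_inner_smul_right, EuclideanSpace.inner_single_right, map_one,
      RCLike.inner_apply, starRingEnd_apply, star_trivial, mul_one, one_mul] at hp hm
    have hxp : x i ≤ (2 / ε) * (cp i - M) := by
      rw [div_mul_eq_mul_div, le_div_iff₀ hε]
      nlinarith
    have hxm : -(x i) ≤ (2 / ε) * (cm i - M) := by
      rw [div_mul_eq_mul_div, le_div_iff₀ hε]
      nlinarith
    rw [abs_le]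
    constructor
    · have : (2 / ε) * (cm i - M) ≤ K i :=
        mul_le_mul_of_nonneg_left (le_max_right _ _) (by positivity)
      linarith
    · have : (2 / ε) * (cp i - M) ≤ K i :=
        mul_le_mul_of_nonneg_left (le_max_left _ _) (by positivity)
      linarith
  have hbdd : Bornology.IsBounded
      {x : EuclideanSpace ℝ (Fin d) | (M : EReal) ≤ legendre I x} := by
    apply Bornology.IsBounded.subset
      (Metric.isBounded_closedBall (x := (0 : EuclideanSpace ℝ (Fin d)))
        (r := Real.sqrt (∑ i, K i ^ 2)))
    intro x hx
    rw [Metric.mem_closedBall, dist_zero_right, EuclideanSpace.norm_eq]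
    apply Real.sqrt_le_sqrt
    apply Finset.sum_le_sum
    intro i _
    have := hbound x hx i
    have habs : |x i| ^ 2 ≤ K i ^ 2 := pow_le_pow_left₀ (abs_nonneg _) this 2
    simpa [Real.norm_eq_abs, sq_abs] using habs
  exact Metric.isCompact_of_isClosed_isBounded hclosed hbdd

end QLDP
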